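/- arXiv:1803.04124 — 4 statements merged into one kernel-verified Lean document; each statement's English description precedes it below -/
import Mathlib

section
/- Let A be a cocommutative Hopf monoid with antipode z_A and B a bimonoid in M, and let s : A → B be a bimonoid morphism. Let j : E → A be the equalizer of (1_A⊗s)∘δ_A and 1_A⊗u_B (the latter meaning ρ_A⁻¹ followed by 1_A⊗u_B). Then z_A∘j also equalizes this pair, i.e. (1_A⊗s)∘δ_A∘z_A∘j = (1_A⊗u_B)∘ρ⁻¹∘z_A∘j; consequently there is a unique morphism z' : E → E with j∘z' = z_A∘j. -/
open CategoryTheory Category MonoidalCategory Limits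

universe v u

variable {C : Type u} [Category.{v} C] [MonoidalCategory C]

/-- The middle-four interchange `(W ⊗ X) ⊗ (Y ⊗ Z) ⟶ (W ⊗ Y) ⊗ (X ⊗ Z)`,
i.e. `1 ⊗ c ⊗ 1` with the (suppressed) coherence isomorphisms inserted. -/
def mid4 [BraidedCategory C] (W X Y Z : C) :
    (W ⊗ X) ⊗ (Y ⊗ Z) ⟶ (W ⊗ Y) ⊗ (X ⊗ Z) :=
  (α_ W X (Y ⊗ Z)).hom ≫ (W ◁ (α_ X Y Z).inv) ≫
    (W ◁ ((β_ X Y).hom ▷ Z)) ≫ (W ◁ (α_ Y X Z).hom) ≫ (α_ W Y (X ⊗ Z)).inv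

/-- A monoid structure `(A, m, u)` on the object `A`. -/
structure MonObj' (A : C) where
  mul : A ⊗ A ⟶ A
  one : 𝟙_ C ⟶ A
  one_mul : (one ▷ A) ≫ mul = (λ_ A).hom
  mul_one : (A ◁ one) ≫ mul = (ρ_ A).hom
  mul_assoc : (mul ▷ A) ≫ mul = (α_ A A A).hom ≫ (A ◁ mul) ≫ mul

/-- A comonoid structure `(A, δ, ε)` on the object `A`. -/
structure ComonObj' (A : C) where
  comul : A ⟶ A ⊗ A
  counit : A ⟶ 𝟙_ C
  counit_comul : comul ≫ (counit ▷ A) = (λ_ A).inv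
  comul_counit : comul ≫ (A ◁ counit) = (ρ_ A).inv
  comul_assoc : comul ≫ (comul ▷ A) ≫ (α_ A A A).hom = comul ≫ (A ◁ comul)

/-- A bimonoid structure on the object `A`: a monoid and comonoid structure such that
the comultiplication and counit are monoid morphisms (`A ⊗ A` carrying the multiplication
`(m ⊗ m) ∘ (1 ⊗ c ⊗ 1)` and unit `u ⊗ u`). -/
structure BimonObj' [BraidedCategory C] (A : C) extends toMonObj : MonObj' A, toComonObj : ComonObj' A where
  mul_comul : mul ≫ comul = (comul ⊗ₘ comul) ≫ mid4 A A A A ≫ (mul ⊗ₘ mul)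
  one_comul : one ≫ comul = (λ_ (𝟙_ C)).inv ≫ (one ⊗ₘ one)
  mul_counit : mul ≫ counit = (counit ⊗ₘ counit) ≫ (λ_ (𝟙_ C)).hom
  one_counit : one ≫ counit = 𝟙 (𝟙_ C)

/-- `f` is a morphism of monoids. -/
def IsMonHom' {A B : C} (MA : MonObj' A) (MB : MonObj' B) (f : A ⟶ B) : Prop :=
  MA.mul ≫ f = (f ⊗ₘ f) ≫ MB.mul ∧ MA.one ≫ f = MB.one

/-- `f` is a morphism of comonoids. -/
def IsComonHom' {A B : C} (MA : ComonObj' A) (MB : ComonObj' B) (f : A ⟶ B) : Prop :=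
  f ≫ MB.comul = MA.comul ≫ (f ⊗ₘ f) ∧ f ≫ MB.counit = MA.counit

/-- `f` is a morphism of bimonoids (preserves all four structure maps). -/
def IsBimonHom' [BraidedCategory C] {A B : C} (MA : BimonObj' A) (MB : BimonObj' B)
    (f : A ⟶ B) : Prop :=
  IsMonHom' MA.toMonObj MB.toMonObj f ∧ IsComonHom' MA.toComonObj MB.toComonObj f

/-- `z` is an antipode for the bimonoid `M`, i.e. `M` is a Hopf monoid. -/
def IsAntipode [BraidedCategory C] {B : C} (M : BimonObj' B) (z : B ⟶ B) : Prop :=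
  M.comul ≫ (z ▷ B) ≫ M.mul = M.counit ≫ M.one ∧
    M.comul ≫ (B ◁ z) ≫ M.mul = M.counit ≫ M.one

/-- A comonoid is cocommutative when `c ∘ δ = δ`. -/
def IsCocomm [BraidedCategory C] {A : C} (M : ComonObj' A) : Prop :=
  M.comul ≫ (β_ A A).hom = M.comul

/-! Call `f : X ⟶ A` coinvariant when `(1 ⊗ s) ∘ δ ∘ f = (1 ⊗ u_B) ∘ ρ⁻¹ ∘ f`, so that `j` is
the universal coinvariant morphism. By coassociativity a coinvariant `f` also satisfies
`(1 ⊗ (s ∘ z)) ∘ δ ∘ f = (1 ⊗ u_B) ∘ ρ⁻¹ ∘ f`, because `s` is a monoid morphism and `z` is a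
convolution inverse of the identity. Cocommutativity makes `z` a comonoid morphism,
`δ ∘ z = (z ⊗ z) ∘ δ`, and pulling the outer `z` out of `(z ⊗ z)` shows that `z ∘ f` is
coinvariant. The universal property of the equalizer then produces the unique `z'`. -/

abbrev BimonObj'.toHopfObj [BraidedCategory C] {A : C} (MA : BimonObj' A)
    (z : A ⟶ A) (hz : IsAntipode MA z) : HopfObj A where
  one := MA.one
  mul := MA.mul
  one_mul := MA.one_mul
  mul_one := MA.mul_one
  mul_assoc := MA.mul_assoc
  counit := MA.counit
  comul := MA.comul
  counit_comul := MA.counit_comul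
  comul_counit := MA.comul_counit
  comul_assoc := MA.comul_assoc.symm
  mul_comul := MA.mul_comul
  one_comul := MA.one_comul
  mul_counit := MA.mul_counit
  one_counit := MA.one_counit
  antipode := z
  antipode_left := hz.1
  antipode_right := hz.2

lemma IsAntipode.comul_eq_of_cocomm [BraidedCategory C] {A : C} {MA : BimonObj' A}
    {z : A ⟶ A} (hz : IsAntipode MA z) (hcoc : IsCocomm MA.toComonObj) :
    z ≫ MA.comul = MA.comul ≫ (z ⊗ₘ z) := by
  let _ := MA.toHopfObj z hz
  rw [← reassoc_of% hcoc]
  exact HopfObj.antipode_comul A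

def IsCoinvariant {A B X : C} (MA : ComonObj' A) (uB : 𝟙_ C ⟶ B) (s : A ⟶ B)
    (f : X ⟶ A) : Prop :=
  f ≫ MA.comul ≫ (A ◁ s) = f ≫ (ρ_ A).inv ≫ (A ◁ uB)

namespace IsCoinvariant

variable {A B X : C} {MA : ComonObj' A} {uB : 𝟙_ C ⟶ B} {s : A ⟶ B} {f : X ⟶ A}

lemma comul_whiskerLeft (hf : IsCoinvariant MA uB s f) :
    f ≫ MA.comul ≫ (A ◁ (MA.comul ≫ (A ◁ s))) =
      f ≫ MA.comul ≫ (A ◁ ((ρ_ A).inv ≫ (A ◁ uB))) := by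
  calc f ≫ MA.comul ≫ (A ◁ (MA.comul ≫ (A ◁ s)))
      = f ≫ MA.comul ≫ (A ◁ s) ≫ (MA.comul ▷ B) ≫ (α_ A A B).hom := by
        rw [whiskerLeft_comp, ← reassoc_of% MA.comul_assoc, whisker_exchange_assoc]
        simp
    _ = f ≫ MA.comul ≫ (A ◁ ((ρ_ A).inv ≫ (A ◁ uB))) := by
        rw [reassoc_of% hf, whisker_exchange_assoc, ← rightUnitor_inv_naturality_assoc]
        simp

lemma antipode_comp [BraidedCategory C] {MA : BimonObj' A} {MB : MonObj' B}
    {z : A ⟶ A} (hz : MA.comul ≫ (z ▷ A) ≫ MA.mul = MA.counit ≫ MA.one)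
    (hs : IsMonHom' MA.toMonObj MB s) (hf : IsCoinvariant MA.toComonObj MB.one s f) :
    IsCoinvariant MA.toComonObj MB.one (z ≫ s) f := by
  have hzs : z ≫ s = (ρ_ A).inv ≫ (A ◁ MB.one) ≫ ((z ≫ s) ▷ B) ≫ MB.mul := by
    rw [whisker_exchange_assoc, ← rightUnitor_inv_naturality_assoc, MB.mul_one]
    simp
  have hconv : MA.comul ≫ (A ◁ s) ≫ ((z ≫ s) ▷ B) ≫ MB.mul = MA.counit ≫ MB.one := by
    rw [whisker_exchange_assoc, comp_whiskerRight, assoc, ← tensorHom_def_assoc, ← hs.1,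
      reassoc_of% hz, hs.2]
  -- `z ≫ s = (z ≫ s) * u_B` in the convolution monoid; coinvariance of `f` replaces `u_B` by `s`
  -- on the second leg, and `(z ≫ s) * s = (z * 𝟙 A) ≫ s = ε ≫ u_B`.
  have hleg := hf.comul_whiskerLeft =≫ (A ◁ (((z ≫ s) ▷ B) ≫ MB.mul))
  simp only [assoc, ← whiskerLeft_comp] at hleg
  rw [hconv, ← hzs] at hleg
  rw [IsCoinvariant, ← hleg, whiskerLeft_comp, reassoc_of% MA.comul_counit]

lemma comp_of_comul_eq {z : A ⟶ A} (hz : z ≫ MA.comul = MA.comul ≫ (z ⊗ₘ z))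
    (hzs : IsCoinvariant MA uB (z ≫ s) f) :
    IsCoinvariant MA uB s (f ≫ z) := by
  calc (f ≫ z) ≫ MA.comul ≫ (A ◁ s)
      = f ≫ MA.comul ≫ (A ◁ (z ≫ s)) ≫ (z ▷ B) := by
        rw [assoc, reassoc_of% hz, MonoidalCategory.tensorHom_def, assoc, ← whiskerLeft_comp,
          whisker_exchange]
    _ = (f ≫ z) ≫ (ρ_ A).inv ≫ (A ◁ uB) := by
        rw [reassoc_of% hzs, whisker_exchange, rightUnitor_inv_naturality_assoc]
        simp

end IsCoinvariant

theorem statement1 [SymmetricCategory C] {A B E : C}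
    (MA : BimonObj' A) (MB : BimonObj' B) (zA : A ⟶ A) (hzA : IsAntipode MA zA)
    (hcoc : IsCocomm MA.toComonObj)
    (s : A ⟶ B) (hs : IsBimonHom' MA MB s)
    (j : E ⟶ A)
    (hw : j ≫ (MA.comul ≫ (A ◁ s)) = j ≫ ((ρ_ A).inv ≫ (A ◁ MB.one)))
    (hE : IsLimit (Fork.ofι j hw)) :
    ((j ≫ zA) ≫ (MA.comul ≫ (A ◁ s)) = (j ≫ zA) ≫ ((ρ_ A).inv ≫ (A ◁ MB.one))) ∧
    ∃! z' : E ⟶ E, z' ≫ j = j ≫ zA := by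
  have hzj : IsCoinvariant MA.toComonObj MB.one s (j ≫ zA) :=
    (IsCoinvariant.antipode_comp hzA.1 hs.1 hw).comp_of_comul_eq (hzA.comul_eq_of_cocomm hcoc)
  obtain ⟨z', hz'⟩ := Fork.IsLimit.lift' hE (j ≫ zA) hzj
  exact ⟨hzj, z', hz', fun y hy => Fork.IsLimit.hom_ext hE (by simpa using hy.trans hz'.symm)⟩
end

section
/- Let A and B be bimonoids in M with B a Hopf monoid with antipode z, let t : A → B be a comonoid morphism and i : B → A a monoid morphism. Then for any two morphisms φ, ψ : A⊗A → A the following are equivalent: (i) ψ = m_A∘((i∘t)⊗φ)∘(δ_A⊗1_A) (that is, ψ equals the composite (δ_A⊗1_A) : A⊗A → A⊗A⊗A, followed by (i∘t) on the first factor and φ on the last two, followed by m_A); (ii) φ = m_A∘((i∘z∘t)⊗ψ)∘(δ_A⊗1_A). -/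
open CategoryTheory Category MonoidalCategory Limits

universe v u

variable {C : Type u} [Category.{v} C] [MonoidalCategory C]

/-!
Both sides of the equivalence are instances of the action `f • χ = m ∘ (f ⊗ χ) ∘ (δ ⊗ 1)` of
the convolution monoid `Hom(A, A)` on `Hom(A ⊗ A, A)`. The maps `t ≫ i` and `t ≫ z ≫ i` are
mutually inverse for convolution, since `t` preserves `δ, ε`, `i` preserves `m, u` and `z` is
inverse to `1_B`; so acting by one undoes acting by the other.
-/

namespace Convolution

variable {X Y Z : C} (Co : ComonObj' X) (Mo : MonObj' Y)

def conv (f g : X ⟶ Y) : X ⟶ Y := Co.comul ≫ (f ⊗ₘ g) ≫ Mo.mul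

def convOne : X ⟶ Y := Co.counit ≫ Mo.one

def act (f : X ⟶ Y) (χ : X ⊗ Z ⟶ Y) : X ⊗ Z ⟶ Y :=
  (Co.comul ▷ Z) ≫ (α_ X X Z).hom ≫ (f ⊗ₘ χ) ≫ Mo.mul

lemma act_act (f g : X ⟶ Y) (χ : X ⊗ Z ⟶ Y) :
    act Co Mo g (act Co Mo f χ) = act Co Mo (conv Co Mo g f) χ := by
  simp only [act, conv]
  calc (Co.comul ▷ Z) ≫ (α_ X X Z).hom ≫
      (g ⊗ₘ ((Co.comul ▷ Z) ≫ (α_ X X Z).hom ≫ (f ⊗ₘ χ) ≫ Mo.mul)) ≫ Mo.mul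
      = (Co.comul ▷ Z) ≫ (α_ X X Z).hom ≫ (X ◁ (Co.comul ▷ Z)) ≫ (X ◁ (α_ X X Z).hom) ≫
          (g ⊗ₘ ((f ⊗ₘ χ) ≫ Mo.mul)) ≫ Mo.mul := by
        simp only [tensorHom_def' g, MonoidalCategory.whiskerLeft_comp, assoc]
    _ = (Co.comul ▷ Z) ≫ ((Co.comul ▷ X) ▷ Z) ≫ ((α_ X X X).hom ▷ Z) ≫
          (α_ X (X ⊗ X) Z).hom ≫ (X ◁ (α_ X X Z).hom) ≫
          (g ⊗ₘ ((f ⊗ₘ χ) ≫ Mo.mul)) ≫ Mo.mul := by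
        rw [← associator_naturality_middle_assoc, ← comp_whiskerRight_assoc,
          ← Co.comul_assoc]
        simp only [comp_whiskerRight, assoc]
    _ = (Co.comul ▷ Z) ≫ ((Co.comul ▷ X) ▷ Z) ≫ (α_ (X ⊗ X) X Z).hom ≫
          (α_ X X (X ⊗ Z)).hom ≫ (g ⊗ₘ (f ⊗ₘ χ)) ≫ (Y ◁ Mo.mul) ≫ Mo.mul := by
        rw [pentagon_assoc, tensorHom_comp_whiskerLeft_assoc]
    _ = (Co.comul ▷ Z) ≫ ((Co.comul ▷ X) ▷ Z) ≫ (α_ (X ⊗ X) X Z).hom ≫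
          ((g ⊗ₘ f) ⊗ₘ χ) ≫ (Mo.mul ▷ Y) ≫ Mo.mul := by
        rw [← associator_naturality_assoc, Mo.mul_assoc]
    _ = (Co.comul ▷ Z) ≫ (α_ X X Z).hom ≫
          ((Co.comul ≫ (g ⊗ₘ f) ≫ Mo.mul) ⊗ₘ χ) ≫ Mo.mul := by
        rw [tensorHom_comp_whiskerRight_assoc, associator_naturality_left_assoc,
          whiskerRight_comp_tensorHom_assoc]

lemma convOne_act (χ : X ⊗ Z ⟶ Y) : act Co Mo (convOne Co Mo) χ = χ := by
  simp only [act, convOne]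
  rw [← tensorHom_comp_whiskerRight_assoc, Mo.one_mul,
    tensorHom_def Co.counit, assoc, leftUnitor_naturality,
    ← associator_naturality_left_assoc, ← comp_whiskerRight_assoc, Co.counit_comul]
  simp

lemma eq_act_iff_eq_act {f g : X ⟶ Y} (hgf : conv Co Mo g f = convOne Co Mo)
    (hfg : conv Co Mo f g = convOne Co Mo) (φ ψ : X ⊗ Z ⟶ Y) :
    ψ = act Co Mo f φ ↔ φ = act Co Mo g ψ := by
  constructor
  · rintro rfl
    rw [act_act, hgf, convOne_act]
  · rintro rfl
    rw [act_act, hfg, convOne_act]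

variable {X' Y' : C} {Co' : ComonObj' X'} {Mo' : MonObj' Y'} {t : X ⟶ X'} {i : Y ⟶ Y'}

lemma conv_comp_comp (ht : IsComonHom' Co Co' t) (hi : IsMonHom' Mo Mo' i) (p q : X' ⟶ Y) :
    conv Co Mo' (t ≫ p ≫ i) (t ≫ q ≫ i) = t ≫ conv Co' Mo p q ≫ i := by
  simp only [conv, ← tensorHom_comp_tensorHom, assoc]
  rw [← hi.1, reassoc_of% ht.1]

lemma comp_convOne_comp (ht : IsComonHom' Co Co' t) (hi : IsMonHom' Mo Mo' i) :
    t ≫ convOne Co' Mo ≫ i = convOne Co Mo' := by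
  rw [convOne, convOne, assoc, hi.2, reassoc_of% ht.2]

lemma conv_comp_comp_eq_convOne (ht : IsComonHom' Co Co' t) (hi : IsMonHom' Mo Mo' i)
    {p q : X' ⟶ Y} (h : conv Co' Mo p q = convOne Co' Mo) :
    conv Co Mo' (t ≫ p ≫ i) (t ≫ q ≫ i) = convOne Co Mo' := by
  rw [conv_comp_comp Co Mo ht hi, h, comp_convOne_comp Co Mo ht hi]

end Convolution

namespace IsAntipode

open Convolution

variable [BraidedCategory C] {B : C} {MB : BimonObj' B} {z : B ⟶ B}

lemma conv_antipode_id (hz : IsAntipode MB z) :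
    conv MB.toComonObj MB.toMonObj z (𝟙 B) = convOne MB.toComonObj MB.toMonObj := by
  rw [conv, convOne, tensorHom_id, hz.1]

lemma conv_id_antipode (hz : IsAntipode MB z) :
    conv MB.toComonObj MB.toMonObj (𝟙 B) z = convOne MB.toComonObj MB.toMonObj := by
  rw [conv, convOne, id_tensorHom, hz.2]

end IsAntipode

theorem statement3 [SymmetricCategory C] {A B : C}
    (MA : BimonObj' A) (MB : BimonObj' B) (z : B ⟶ B) (hz : IsAntipode MB z)
    (t : A ⟶ B) (ht : IsComonHom' MA.toComonObj MB.toComonObj t)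
    (i : B ⟶ A) (hi : IsMonHom' MB.toMonObj MA.toMonObj i)
    (φ ψ : A ⊗ A ⟶ A) :
    ψ = (MA.comul ▷ A) ≫ (α_ A A A).hom ≫ ((t ≫ i) ⊗ₘ φ) ≫ MA.mul ↔
    φ = (MA.comul ▷ A) ≫ (α_ A A A).hom ≫ ((t ≫ z ≫ i) ⊗ₘ ψ) ≫ MA.mul := by
  have hgf := Convolution.conv_comp_comp_eq_convOne _ _ ht hi hz.conv_antipode_id
  have hfg := Convolution.conv_comp_comp_eq_convOne _ _ ht hi hz.conv_id_antipode
  rw [id_comp] at hgf hfg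
  exact Convolution.eq_act_iff_eq_act MA.toComonObj MA.toMonObj hgf hfg φ ψ
end

section
/- Let A be a bimonoid and B a Hopf monoid with antipode z in M; let s, t : A → B and i : B → A be bimonoid morphisms with s∘i = 1_B and t∘i = 1_B, satisfying c∘(s⊗1_A)∘δ_A = (1_A⊗s)∘δ_A and (t⊗1_A)∘δ_A = (t⊗1_A)∘c∘δ_A. Set ⃗s := m_A∘(1_A⊗(i∘z∘s))∘δ_A and ⃖t := m_A∘((i∘z∘t)⊗1_A)∘δ_A. Then the equation m_A∘(1_A⊗⃗s) = m_A∘(1_A⊗m_A)∘(1_A⊗⃗s⊗⃖t)∘(1_A⊗c_{A,A})∘((i∘t)⊗1_A⊗1_A)∘(δ_A⊗1_A) of morphisms A⊗A → A holds if and only if m_A∘c∘(⃗s⊗⃖t) = m_A∘(⃗s⊗⃖t). -/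
open CategoryTheory Category MonoidalCategory Limits

universe v u

variable {C : Type u} [Category.{v} C] [MonoidalCategory C]

/-- `f` is a morphism of monoids. -/
def IsMonHom {A B : C} (MA : MonObj' A) (MB : MonObj' B) (f : A ⟶ B) : Prop :=
  MA.mul ≫ f = (f ⊗ₘ f) ≫ MB.mul ∧ MA.one ≫ f = MB.one

/-- `f` is a morphism of comonoids. -/
def IsComonHom {A B : C} (MA : ComonObj' A) (MB : ComonObj' B) (f : A ⟶ B) : Prop :=
  f ≫ MB.comul = MA.comul ≫ (f ⊗ₘ f) ∧ f ≫ MB.counit = MA.counit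

/-- `f` is a morphism of bimonoids (preserves all four structure maps). -/
def IsBimonHom [BraidedCategory C] {A B : C} (MA : BimonObj' A) (MB : BimonObj' B)
    (f : A ⟶ B) : Prop :=
  IsMonHom MA.toMonObj MB.toMonObj f ∧ IsComonHom MA.toComonObj MB.toComonObj f

/-!
Work in convolution monoids `X ⟶ Y` (`X` a comonoid, `Y` a monoid), notably `A ⊗ A ⟶ A` for the
tensor-product comonoid `A ⊗ A`, whose counit projections `p, q : A ⊗ A ⟶ A` satisfy
`m ∘ (1 ⊗ f) = p * (q ≫ f)`. In these terms the first equation reads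
`p * (q ≫ ⃗s) = (p ≫ t ≫ i) * ((q ≫ ⃗s) * (p ≫ ⃖t))` and the second says that `p ≫ ⃖t` and
`q ≫ ⃗s` commute. As `z` is an antipode, `t` comonoidal and `i` monoidal, `t ≫ i` is
convolution-invertible with inverse `t ≫ z ≫ i`; since `⃖t = (t ≫ z ≫ i) * 1`, this gives
`p ≫ ⃖t = (p ≫ t ≫ i)⁻¹ * p`, and cancelling the unit `p ≫ t ≫ i` turns one equation into the other.
-/

open MonObj ComonObj

-- Mathlib's `Conv X Y` is a non-reducible synonym of `X ⟶ Y`; transporting its monoid structure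
-- to the hom-type itself avoids casting back and forth.
abbrev convMonoid {X Y : C} [ComonObj X] [MonObj Y] : Monoid (X ⟶ Y) :=
  inferInstanceAs (Monoid (Conv X Y))

attribute [local instance] convMonoid

section Convolution

variable {X X' Y Y' : C} [ComonObj X] [ComonObj X'] [MonObj Y] [MonObj Y']

lemma conv_one_def : (1 : X ⟶ Y) = ε ≫ η := rfl

lemma conv_mul_def (f g : X ⟶ Y) : f * g = Δ ≫ (f ⊗ₘ g) ≫ μ :=
  (Conv.mul_eq f g).trans (by rw [tensorHom_def_assoc])

def precompConv (h : X' ⟶ X) [CategoryTheory.IsComonHom h] : (X ⟶ Y) →* (X' ⟶ Y) where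
  toFun f := h ≫ f
  map_one' := by rw [conv_one_def, conv_one_def, IsComonHom.hom_counit_assoc]
  map_mul' f g := by
    simp only [conv_mul_def, IsComonHom.hom_comul_assoc, tensorHom_comp_tensorHom_assoc]

def postcompConv (k : Y ⟶ Y') [CategoryTheory.IsMonHom k] : (X ⟶ Y) →* (X ⟶ Y') where
  toFun f := f ≫ k
  map_one' := by rw [conv_one_def, conv_one_def, Category.assoc, IsMonHom.one_hom]
  map_mul' f g := by
    simp only [conv_mul_def, Category.assoc, IsMonHom.mul_hom, tensorHom_comp_tensorHom_assoc]

lemma comp_conv_mul_comp_eq_one (h : X' ⟶ X) [CategoryTheory.IsComonHom h] (k : Y ⟶ Y')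
    [CategoryTheory.IsMonHom k] {f g : X ⟶ Y} (hfg : f * g = 1) :
    (h ≫ f ≫ k) * (h ≫ g ≫ k) = 1 := by
  have := congrArg ((precompConv h).comp (postcompConv k)) hfg
  rwa [map_mul, map_one] at this

end Convolution

section TensorComonoid

variable [BraidedCategory C] {X Y : C} [ComonObj X] [ComonObj Y]

variable (X Y) in
def tensorFst : X ⊗ Y ⟶ X := X ◁ ε[Y] ≫ (ρ_ X).hom

variable (X Y) in
def tensorSnd : X ⊗ Y ⟶ Y := ε[X] ▷ Y ≫ (λ_ Y).hom

lemma comul_tensor_whiskerRight_tensorFst :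
    Δ[X ⊗ Y] ≫ tensorFst X Y ▷ (X ⊗ Y) = Δ[X] ▷ Y ≫ (α_ X X Y).hom := by
  have h := tensorμ_natural_right_assoc X X ε[Y] (𝟙 Y) ((ρ_ X).hom ▷ (X ⊗ Y))
  simp only [MonoidalCategory.whiskerLeft_id, tensorHom_id] at h
  have coh : (X ⊗ X) ◁ (λ_ Y).inv ≫ tensorμ X X (𝟙_ C) Y ≫ (ρ_ X).hom ▷ (X ⊗ Y) =
      (α_ X X Y).hom := by
    simp only [tensorμ, braiding_tensorUnit_right]
    monoidal
  rw [Comon.tensorObj_comul, tensorFst, comp_whiskerRight, Category.assoc, ← h,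
    tensorHom_def_assoc, ← whiskerLeft_comp_assoc, counit_comul, coh]

lemma comul_tensor_tensorFst_tensorSnd :
    Δ[X ⊗ Y] ≫ (tensorFst X Y ⊗ₘ tensorSnd X Y) = 𝟙 (X ⊗ Y) := by
  rw [MonoidalCategory.tensorHom_def, reassoc_of% comul_tensor_whiskerRight_tensorFst, tensorSnd,
    MonoidalCategory.whiskerLeft_comp, ← associator_naturality_middle_assoc,
    ← comp_whiskerRight_assoc, comul_counit]
  monoidal

lemma comul_tensor_tensorSnd_tensorFst :
    Δ[X ⊗ Y] ≫ (tensorSnd X Y ⊗ₘ tensorFst X Y) = (β_ X Y).hom := by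
  have h := tensorμ_natural_assoc ε[X] (𝟙 X) (𝟙 Y) ε[Y] ((λ_ Y).hom ⊗ₘ (ρ_ X).hom)
  have coh : ((λ_ X).inv ⊗ₘ (ρ_ Y).inv) ≫ tensorμ (𝟙_ C) X Y (𝟙_ C) ≫
      ((λ_ Y).hom ⊗ₘ (ρ_ X).hom) = (β_ X Y).hom := by
    simp only [tensorμ]
    monoidal
  simp only [id_tensorHom, tensorHom_id] at h
  rw [Comon.tensorObj_comul, tensorSnd, tensorFst, ← tensorHom_comp_tensorHom, Category.assoc,
    ← h, tensorHom_comp_tensorHom_assoc, counit_comul, comul_counit, coh]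

instance : CategoryTheory.IsComonHom (tensorFst X Y) where
  hom_counit := by
    rw [tensorFst, Category.assoc, ← rightUnitor_naturality, Comon.tensorObj_counit,
      tensorHom_def'_assoc, unitors_equal]
  hom_comul := by
    rw [MonoidalCategory.tensorHom_def, reassoc_of% comul_tensor_whiskerRight_tensorFst, tensorFst,
      Category.assoc, ← rightUnitor_naturality, whisker_exchange_assoc]
    monoidal

end TensorComonoid

section TensorConvolution

variable [BraidedCategory C] {X Y Z : C} [ComonObj X] [ComonObj Y] [MonObj Z]

lemma tensorFst_comp_mul_tensorSnd_comp (f : X ⟶ Z) (g : Y ⟶ Z) :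
    (tensorFst X Y ≫ f) * (tensorSnd X Y ≫ g) = (f ⊗ₘ g) ≫ μ := by
  rw [conv_mul_def, ← tensorHom_comp_tensorHom, Category.assoc,
    reassoc_of% comul_tensor_tensorFst_tensorSnd]

lemma tensorSnd_comp_mul_tensorFst_comp (f : X ⟶ Z) (g : Y ⟶ Z) :
    (tensorSnd X Y ≫ g) * (tensorFst X Y ≫ f) = (β_ X Y).hom ≫ (g ⊗ₘ f) ≫ μ := by
  rw [conv_mul_def, ← tensorHom_comp_tensorHom, Category.assoc,
    reassoc_of% comul_tensor_tensorSnd_tensorFst]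

lemma tensorFst_comp_mul (f : X ⟶ Z) (φ : X ⊗ Y ⟶ Z) :
    (tensorFst X Y ≫ f) * φ = Δ[X] ▷ Y ≫ (α_ X X Y).hom ≫ (f ⊗ₘ φ) ≫ μ := by
  rw [conv_mul_def, ← id_comp φ, ← tensorHom_comp_tensorHom, id_comp, tensorHom_id,
    Category.assoc, reassoc_of% comul_tensor_whiskerRight_tensorFst]

end TensorConvolution

lemma Units.mul_eq_mul_mul_inv_mul_iff {M : Type*} [Monoid M] (u : Mˣ) (p s : M) :
    p * s = u * (s * (↑u⁻¹ * p)) ↔ ↑u⁻¹ * p * s = s * (↑u⁻¹ * p) := by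
  rw [_root_.mul_assoc, Units.inv_mul_eq_iff_eq_mul]

lemma braiding_comp_eq_iff [SymmetricCategory C] {X Y Z : C} (f : X ⊗ Y ⟶ Z) (g : Y ⊗ X ⟶ Z) :
    (β_ Y X).hom ≫ f = g ↔ f = (β_ X Y).hom ≫ g := by
  rw [SymmetricCategory.braiding_swap_eq_inv_braiding, Iso.inv_comp_eq]

theorem whiskerLeft_mul_eq_iff_braiding_mul_eq [SymmetricCategory C] {A : C} [MonObj A]
    [ComonObj A] (u : (A ⟶ A)ˣ) (S T : A ⟶ A) (hT : T = (↑u⁻¹ : A ⟶ A) * 𝟙 A) :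
    (A ◁ S ≫ μ = Δ ▷ A ≫ ((u : A ⟶ A) ▷ A) ▷ A ≫ (α_ A A A).hom ≫ A ◁ (β_ A A).hom ≫
        A ◁ (S ⊗ₘ T) ≫ A ◁ μ ≫ μ) ↔
      (S ⊗ₘ T) ≫ (β_ A A).hom ≫ μ = (S ⊗ₘ T) ≫ μ := by
  set P := tensorFst A A
  set Q := tensorSnd A A
  set U := Units.map (precompConv (Y := A) P) u
  have hP : P * (Q ≫ S) = A ◁ S ≫ μ := by
    simpa using tensorFst_comp_mul_tensorSnd_comp (𝟙 A) S
  have hPT : P ≫ T = ↑U⁻¹ * P := by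
    calc P ≫ T = precompConv P ((↑u⁻¹ : A ⟶ A) * 𝟙 A) := by rw [hT]; rfl
      _ = ↑U⁻¹ * (P ≫ 𝟙 A) := map_mul _ _ _
      _ = ↑U⁻¹ * P := by rw [comp_id]
  have hQP : (Q ≫ S) * (P ≫ T) = (β_ A A).hom ≫ (S ⊗ₘ T) ≫ μ :=
    tensorSnd_comp_mul_tensorFst_comp T S
  have hPQ : (P ≫ T) * (Q ≫ S) = (T ⊗ₘ S) ≫ μ := tensorFst_comp_mul_tensorSnd_comp T S
  have hUmul : Δ ▷ A ≫ ((u : A ⟶ A) ▷ A) ▷ A ≫ (α_ A A A).hom ≫ A ◁ (β_ A A).hom ≫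
      A ◁ (S ⊗ₘ T) ≫ A ◁ μ ≫ μ = ↑U * ((Q ≫ S) * (P ≫ T)) := by
    rw [hQP]
    change _ = (P ≫ (u : A ⟶ A)) * _
    rw [tensorFst_comp_mul, associator_naturality_left_assoc,
      MonoidalCategory.tensorHom_def (u : A ⟶ A)]
    simp only [MonoidalCategory.whiskerLeft_comp, Category.assoc]
  rw [← hP, hUmul, hPT, Units.mul_eq_mul_mul_inv_mul_iff, ← hPT, hPQ, hQP,
    BraidedCategory.braiding_naturality_assoc, braiding_comp_eq_iff]

abbrev MonObj'.monObj {A : C} (M : MonObj' A) : MonObj A where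
  one := M.one
  mul := M.mul
  one_mul := M.one_mul
  mul_one := M.mul_one
  mul_assoc := M.mul_assoc

abbrev ComonObj'.comonObj {A : C} (M : ComonObj' A) : ComonObj A where
  counit := M.counit
  comul := M.comul
  counit_comul := M.counit_comul
  comul_counit := M.comul_counit
  comul_assoc := M.comul_assoc.symm

theorem statement7_general [SymmetricCategory C] {A B : C}
    (MA : BimonObj' A) (MB : BimonObj' B) (z : B ⟶ B) (hz : IsAntipode MB z)
    (s t : A ⟶ B) (i : B ⟶ A)
    (ht : IsBimonHom MA MB t) (hi : IsBimonHom MB MA i) :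
    ((A ◁ (MA.comul ≫ (A ◁ (s ≫ z ≫ i)) ≫ MA.mul)) ≫ MA.mul =
      (MA.comul ▷ A) ≫ (((t ≫ i) ▷ A) ▷ A) ≫ (α_ A A A).hom ≫
        (A ◁ (β_ A A).hom) ≫
        (A ◁ ((MA.comul ≫ (A ◁ (s ≫ z ≫ i)) ≫ MA.mul) ⊗ₘ
          (MA.comul ≫ ((t ≫ z ≫ i) ▷ A) ≫ MA.mul))) ≫
        (A ◁ MA.mul) ≫ MA.mul) ↔
    ((MA.comul ≫ (A ◁ (s ≫ z ≫ i)) ≫ MA.mul) ⊗ₘ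
        (MA.comul ≫ ((t ≫ z ≫ i) ▷ A) ≫ MA.mul)) ≫ (β_ A A).hom ≫ MA.mul =
      ((MA.comul ≫ (A ◁ (s ≫ z ≫ i)) ≫ MA.mul) ⊗ₘ
        (MA.comul ≫ ((t ≫ z ≫ i) ▷ A) ≫ MA.mul)) ≫ MA.mul := by
  let _ := MA.toMonObj.monObj
  let _ := MA.toComonObj.comonObj
  let _ := MB.toMonObj.monObj
  let _ := MB.toComonObj.comonObj
  have : CategoryTheory.IsComonHom t := ⟨ht.2.2, ht.2.1⟩
  have : CategoryTheory.IsMonHom i := ⟨hi.1.2, hi.1.1⟩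
  have hz₁ : z * 𝟙 B = 1 := by rw [conv_mul_def, tensorHom_id]; exact hz.1
  have hz₂ : 𝟙 B * z = 1 := by rw [conv_mul_def, id_tensorHom]; exact hz.2
  let u : (A ⟶ A)ˣ :=
    { val := t ≫ i
      inv := t ≫ z ≫ i
      val_inv := by simpa using comp_conv_mul_comp_eq_one t i hz₂
      inv_val := by simpa using comp_conv_mul_comp_eq_one t i hz₁ }
  exact whiskerLeft_mul_eq_iff_braiding_mul_eq u _ _ (by rw [conv_mul_def, tensorHom_id]; rfl)

theorem statement7 [SymmetricCategory C] {A B : C}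
    (MA : BimonObj' A) (MB : BimonObj' B) (z : B ⟶ B) (hz : IsAntipode MB z)
    (s t : A ⟶ B) (i : B ⟶ A)
    (hs : IsBimonHom MA MB s) (ht : IsBimonHom MA MB t) (hi : IsBimonHom MB MA i)
    (hsi : i ≫ s = 𝟙 B) (hti : i ≫ t = 𝟙 B)
    (hcs : MA.comul ≫ (s ▷ A) ≫ (β_ B A).hom = MA.comul ≫ (A ◁ s))
    (hct : MA.comul ≫ (t ▷ A) = MA.comul ≫ (β_ A A).hom ≫ (t ▷ A)) :
    ((A ◁ (MA.comul ≫ (A ◁ (s ≫ z ≫ i)) ≫ MA.mul)) ≫ MA.mul =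
      (MA.comul ▷ A) ≫ (((t ≫ i) ▷ A) ▷ A) ≫ (α_ A A A).hom ≫
        (A ◁ (β_ A A).hom) ≫
        (A ◁ ((MA.comul ≫ (A ◁ (s ≫ z ≫ i)) ≫ MA.mul) ⊗ₘ
          (MA.comul ≫ ((t ≫ z ≫ i) ▷ A) ≫ MA.mul))) ≫
        (A ◁ MA.mul) ≫ MA.mul) ↔
    ((MA.comul ≫ (A ◁ (s ≫ z ≫ i)) ≫ MA.mul) ⊗ₘ
        (MA.comul ≫ ((t ≫ z ≫ i) ▷ A) ≫ MA.mul)) ≫ (β_ A A).hom ≫ MA.mul =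
      ((MA.comul ≫ (A ◁ (s ≫ z ≫ i)) ≫ MA.mul) ⊗ₘ
        (MA.comul ≫ ((t ≫ z ≫ i) ▷ A) ≫ MA.mul)) ≫ MA.mul :=
  statement7_general MA MB z hz s t i ht hi
end

section
/- Let B and Y be bimonoids in M with B cocommutative, and let x : B⊗Y → Y⊗B be a distributive law from the monoid B to the monoid Y satisfying (ε_Y⊗1_B)∘x = 1_B⊗ε_Y (as morphisms B⊗Y → B, suppressing unitors). Then l := (1_Y⊗ε_B)∘x : B⊗Y → Y is a left action of B on Y: l∘(u_B⊗1_Y) = 1_Y and l∘(m_B⊗1_Y) = l∘(1_B⊗l). -/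
/-! Post-composing the distributive law with `ε_B` discards the `B` leg. Since `ε_B` is a monoid
morphism into the unit object, the axioms of `x` for `u_B` and `m_B` become the action axioms; for
`m_B` one splits `ε_B ∘ m_B = ε_B ⊗ ε_B` and slides the counit on the inner `B` leg past the outer
copy of `x` by naturality. -/

open CategoryTheory Category MonoidalCategory Limits

universe v u

variable {C : Type u} [Category.{v} C] [MonoidalCategory C]

/-- `l` is a left action of the monoid `B` on `Y`. -/
def IsAction {B Y : C} (MB : MonObj' B) (l : B ⊗ Y ⟶ Y) : Prop :=
  (MB.one ▷ Y) ≫ l = (λ_ Y).hom ∧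
    (MB.mul ▷ Y) ≫ l = (α_ B B Y).hom ≫ (B ◁ l) ≫ l

/-- The action `l` makes the monoid `Y` a `B`-module monoid. -/
def IsModuleMonoid [BraidedCategory C] {B Y : C} (MB : BimonObj' B) (MY : MonObj' Y)
    (l : B ⊗ Y ⟶ Y) : Prop :=
  (ρ_ B).inv ≫ (B ◁ MY.one) ≫ l = MB.counit ≫ MY.one ∧
    (B ◁ MY.mul) ≫ l = (MB.comul ▷ (Y ⊗ Y)) ≫ mid4 B B Y Y ≫ (l ⊗ₘ l) ≫ MY.mul

/-- The action `l` makes the comonoid `Y` a `B`-module comonoid. -/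
def IsModuleComonoid [BraidedCategory C] {B Y : C} (MB : BimonObj' B) (MY : ComonObj' Y)
    (l : B ⊗ Y ⟶ Y) : Prop :=
  l ≫ MY.counit = (MB.counit ⊗ₘ MY.counit) ≫ (λ_ (𝟙_ C)).hom ∧
    l ≫ MY.comul = (MB.comul ⊗ₘ MY.comul) ≫ mid4 B B Y Y ≫ (l ⊗ₘ l)

/-- `x` is a distributive law from the monoid `B` to the monoid `Y`. -/
def IsDistLaw {B Y : C} (MB : MonObj' B) (MY : MonObj' Y) (x : B ⊗ Y ⟶ Y ⊗ B) : Prop :=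
  (λ_ Y).inv ≫ (MB.one ▷ Y) ≫ x = (ρ_ Y).inv ≫ (Y ◁ MB.one) ∧
  (ρ_ B).inv ≫ (B ◁ MY.one) ≫ x = (λ_ B).inv ≫ (MY.one ▷ B) ∧
  (MB.mul ▷ Y) ≫ x =
    (α_ B B Y).hom ≫ (B ◁ x) ≫ (α_ B Y B).inv ≫ (x ▷ B) ≫
      (α_ Y B B).hom ≫ (Y ◁ MB.mul) ∧
  (B ◁ MY.mul) ≫ x =
    (α_ B Y Y).inv ≫ (x ▷ Y) ≫ (α_ Y B Y).hom ≫ (Y ◁ x) ≫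
      (α_ Y Y B).inv ≫ (MY.mul ▷ B)

section

variable {B Y : C} (MB : MonObj' B) (x : B ⊗ Y ⟶ Y ⊗ B) (ε : B ⟶ 𝟙_ C)

lemma distLaw_one_comp_counit
    (hx : (λ_ Y).inv ≫ (MB.one ▷ Y) ≫ x = (ρ_ Y).inv ≫ (Y ◁ MB.one))
    (hε : MB.one ≫ ε = 𝟙 (𝟙_ C)) :
    (MB.one ▷ Y) ≫ x ≫ (Y ◁ ε) ≫ (ρ_ Y).hom = (λ_ Y).hom := by
  rw [← cancel_epi (λ_ Y).inv, reassoc_of% hx]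
  simp [← MonoidalCategory.whiskerLeft_comp_assoc, hε]

lemma distLaw_mul_comp_counit
    (hx : (MB.mul ▷ Y) ≫ x =
      (α_ B B Y).hom ≫ (B ◁ x) ≫ (α_ B Y B).inv ≫ (x ▷ B) ≫ (α_ Y B B).hom ≫ (Y ◁ MB.mul))
    (hε : MB.mul ≫ ε = (ε ⊗ₘ ε) ≫ (λ_ (𝟙_ C)).hom) :
    (MB.mul ▷ Y) ≫ x ≫ (Y ◁ ε) ≫ (ρ_ Y).hom =
      (α_ B B Y).hom ≫ (B ◁ (x ≫ (Y ◁ ε) ≫ (ρ_ Y).hom)) ≫ x ≫ (Y ◁ ε) ≫ (ρ_ Y).hom := by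
  rw [reassoc_of% hx, ← MonoidalCategory.whiskerLeft_comp_assoc, hε,
    MonoidalCategory.tensorHom_def']
  simp only [whiskerRight_id, assoc, MonoidalCategory.whiskerLeft_comp, whiskerLeft_rightUnitor,
    whiskerLeft_rightUnitor_inv, triangle, Iso.hom_inv_id, comp_id, Iso.inv_hom_id,
    Iso.cancel_iso_hom_left]
  rw [← associator_naturality_right_assoc, Iso.hom_inv_id_assoc, ← whisker_exchange_assoc,
    rightUnitor_naturality_assoc, associator_inv_naturality_right_assoc]

theorem isAction_distLaw_comp_counit
    (hone : (λ_ Y).inv ≫ (MB.one ▷ Y) ≫ x = (ρ_ Y).inv ≫ (Y ◁ MB.one))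
    (hmul : (MB.mul ▷ Y) ≫ x =
      (α_ B B Y).hom ≫ (B ◁ x) ≫ (α_ B Y B).inv ≫ (x ▷ B) ≫ (α_ Y B B).hom ≫ (Y ◁ MB.mul))
    (hε_one : MB.one ≫ ε = 𝟙 (𝟙_ C)) (hε_mul : MB.mul ≫ ε = (ε ⊗ₘ ε) ≫ (λ_ (𝟙_ C)).hom) :
    IsAction MB (x ≫ (Y ◁ ε) ≫ (ρ_ Y).hom) :=
  ⟨distLaw_one_comp_counit MB x ε hone hε_one, distLaw_mul_comp_counit MB x ε hmul hε_mul⟩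

end

theorem statement10_general [SymmetricCategory C] {B Y : C}
    (MB : BimonObj' B)
    (MY : BimonObj' Y)
    (x : B ⊗ Y ⟶ Y ⊗ B) (hx : IsDistLaw MB.toMonObj MY.toMonObj x) :
    IsAction MB.toMonObj (x ≫ (Y ◁ MB.counit) ≫ (ρ_ Y).hom) := by
  obtain ⟨hone, -, hmul, -⟩ := hx
  exact isAction_distLaw_comp_counit MB.toMonObj x MB.counit hone hmul
    MB.one_counit MB.mul_counit

theorem statement10 [SymmetricCategory C] {B Y : C}
    (MB : BimonObj' B) (hcoc : IsCocomm MB.toComonObj)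
    (MY : BimonObj' Y)
    (x : B ⊗ Y ⟶ Y ⊗ B) (hx : IsDistLaw MB.toMonObj MY.toMonObj x)
    (hxe : x ≫ (MY.counit ▷ B) ≫ (λ_ B).hom = (B ◁ MY.counit) ≫ (ρ_ B).hom) :
    IsAction MB.toMonObj (x ≫ (Y ◁ MB.counit) ≫ (ρ_ Y).hom) :=
  statement10_general MB MY x hx
end
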